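/- In A₀, for every s ≥ 2 and all m, n ≥ 0 one has R(s)·P(m) = 0 and I(n)·R(s) = 0; explicitly, i(ij−ji)^(s−1) j · (ij−ji)^m j = 0 and i(ij−ji)^n · i(ij−ji)^(s−1) j = 0. (Thus the relations of types 4) and 5) of the q = 0 relation list are redundant.) -/

import Mathlib

open FreeAlgebra

noncomputable section

/-- Defining relations for the specialisation at `q = 0` of the generic composition
algebra of the Kronecker quiver, on generators `i = ι ℚ 0` and `j = ι ℚ 1`:
(1) `i^m j^(m+1) i^(m+1) j^(m+2) = i^(2m+1) j^(2m+3)` for all `m ≥ 0`;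
(2) `i^(n+2) j^(n+1) i^(n+1) j^n = i^(2n+3) j^(2n+1)` for all `n ≥ 0`;
(3) `(i^m j^m)(i^n j^n) = (i^n j^n)(i^m j^m)` for all `m, n ≥ 1`. -/
inductive KroneckerRel0 : FreeAlgebra ℚ (Fin 2) → FreeAlgebra ℚ (Fin 2) → Prop
  | preproj (m : ℕ) :
      KroneckerRel0
        (ι ℚ 0 ^ m * ι ℚ 1 ^ (m + 1) * (ι ℚ 0 ^ (m + 1) * ι ℚ 1 ^ (m + 2)))
        (ι ℚ 0 ^ (2 * m + 1) * ι ℚ 1 ^ (2 * m + 3))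
  | preinj (n : ℕ) :
      KroneckerRel0
        (ι ℚ 0 ^ (n + 2) * ι ℚ 1 ^ (n + 1) * (ι ℚ 0 ^ (n + 1) * ι ℚ 1 ^ n))
        (ι ℚ 0 ^ (2 * n + 3) * ι ℚ 1 ^ (2 * n + 1))
  | deltaComm (m n : ℕ) (hm : 1 ≤ m) (hn : 1 ≤ n) :
      KroneckerRel0
        (ι ℚ 0 ^ m * ι ℚ 1 ^ m * (ι ℚ 0 ^ n * ι ℚ 1 ^ n))
        (ι ℚ 0 ^ n * ι ℚ 1 ^ n * (ι ℚ 0 ^ m * ι ℚ 1 ^ m))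

/-- `A₀`, the composition algebra of the Kronecker quiver specialised at `q = 0`,
presented by generators `i, j` and the relations above. -/
abbrev A0 : Type := RingQuot KroneckerRel0

/-- The generator `i` of `A₀`. -/
def iA : A0 := RingQuot.mkAlgHom ℚ KroneckerRel0 (ι ℚ 0)

/-- The generator `j` of `A₀`. -/
def jA : A0 := RingQuot.mkAlgHom ℚ KroneckerRel0 (ι ℚ 1)

/-- The commutator `ij - ji` in `A₀`. -/
def cA : A0 := iA * jA - jA * iA

/-- `P(m) = (ij - ji)^m j` in `A₀`. -/
def PA (m : ℕ) : A0 := cA ^ m * jA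

/-- `I(n) = i (ij - ji)^n` in `A₀`. -/
def IA (n : ℕ) : A0 := iA * cA ^ n

/-- `R(1) = ij - ji` and `R(s+1) = i (ij - ji)^s j` for `s ≥ 1` in `A₀`
(the value at `0` is junk). -/
def RA : ℕ → A0
  | 0 => 0
  | 1 => cA
  | (s + 2) => iA * cA ^ (s + 1) * jA

/-- `δ_m = i^m j^m` in `A₀`. -/
def deltaA (m : ℕ) : A0 := iA ^ m * jA ^ m

/-!
Write `c = ij - ji` and `δₙ = iⁿjⁿ`. The `m = 0` and `n = 0` instances of relations (1) and (2)
say `c j² = 0` and `i² c = 0`; hence `c j c = c j (ij)` and `c i c = (ij)(i c)`. So a factor `c`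
of `P(m + 1)` or `I(n + 1)` next to `R(s)` can be traded for a factor `δ₁ = ij`, which can then
be moved past `R(s)`, until `P(0)` or `I(0)` is reached. That `δ₁` commutes with every `i cᵗ j`
follows by strong induction on `t` from the expansion
`δₜ₊₁ = i cᵗ j + ∑_{k < t} δₖ₊₁ · i cᵗ⁻¹⁻ᵏ j`, a telescoping of `iʳ⁺¹ jʳ c = iʳ⁺² jʳ⁺¹ - δᵣ₊₁ i`,
since `δ₁` commutes with every `δₖ` by relation (3).
-/

namespace Kronecker

open Finset

variable {R : Type*} [Ring R] {x y : R} {a r : ℕ}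

theorem lie_mul_sq_eq_zero (h : y * (x * y ^ 2) = x * y ^ 3) : ⁅x, y⁆ * y ^ 2 = 0 := by
  rw [Ring.lie_def, sub_mul, mul_assoc, ← pow_succ', mul_assoc, h, sub_self]

theorem sq_mul_lie_eq_zero (h : x ^ 2 * y * x = x ^ 3 * y) : x ^ 2 * ⁅x, y⁆ = 0 := by
  rw [Ring.lie_def, mul_sub, ← mul_assoc, ← mul_assoc, h, ← pow_succ, sub_self]

theorem lie_mul_right_mul_lie (h : ⁅x, y⁆ * y ^ 2 = 0) :
    ⁅x, y⁆ * y * ⁅x, y⁆ = ⁅x, y⁆ * y * (x * y) := by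
  have : ⁅x, y⁆ * y * ⁅x, y⁆ = ⁅x, y⁆ * y * (x * y) - ⁅x, y⁆ * y ^ 2 * x := by
    rw [Ring.lie_def x y]; noncomm_ring
  rw [this, h, zero_mul, sub_zero]

theorem lie_mul_left_mul_lie (h : x ^ 2 * ⁅x, y⁆ = 0) :
    ⁅x, y⁆ * x * ⁅x, y⁆ = x * y * (x * ⁅x, y⁆) := by
  have : ⁅x, y⁆ * x * ⁅x, y⁆ = x * y * (x * ⁅x, y⁆) - y * (x ^ 2 * ⁅x, y⁆) := by
    rw [Ring.lie_def x y]; noncomm_ring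
  rw [this, h, mul_zero, sub_zero]

theorem sq_mul_mul_pow (h : x ^ 2 * y * x = x ^ 3 * y) (r : ℕ) :
    x ^ 2 * y * x ^ r = x ^ (r + 2) * y := by
  induction r with
  | zero => simp
  | succ r ih =>
    calc x ^ 2 * y * x ^ (r + 1) = x * (x ^ 2 * y * x ^ r) := by
          rw [pow_succ' x r, ← mul_assoc, h, pow_succ' x 2]; simp only [mul_assoc]
      _ = x ^ (r + 1 + 2) * y := by rw [ih, ← mul_assoc, ← pow_succ', add_right_comm]

theorem pow_succ_mul_pow_mul_mul (h : x ^ 2 * y * x = x ^ 3 * y)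
    (hδ : Commute (x * y) (x ^ r * y ^ r)) :
    x ^ (r + 1) * y ^ r * (x * y) = x ^ (r + 2) * y ^ (r + 1) := by
  calc x ^ (r + 1) * y ^ r * (x * y) = x * (x * y * (x ^ r * y ^ r)) := by
        rw [hδ.eq, pow_succ']; simp only [mul_assoc]
    _ = x ^ 2 * y * x ^ r * y ^ r := by simp only [sq, mul_assoc]
    _ = x ^ (r + 2) * y ^ (r + 1) := by rw [sq_mul_mul_pow h, pow_succ' y, mul_assoc]

theorem pow_succ_mul_pow_mul_lie (h : x ^ 2 * y * x = x ^ 3 * y)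
    (hδ : Commute (x * y) (x ^ r * y ^ r)) :
    x ^ (r + 1) * y ^ r * ⁅x, y⁆ = x ^ (r + 2) * y ^ (r + 1) - x ^ (r + 1) * y ^ (r + 1) * x := by
  rw [Ring.lie_def, mul_sub, pow_succ_mul_pow_mul_mul h hδ, pow_succ y r]
  simp only [mul_assoc]

theorem pow_succ_mul_pow_mul_lie_pow (h : x ^ 2 * y * x = x ^ 3 * y)
    (hδ : ∀ n, Commute (x * y) (x ^ n * y ^ n)) (e r : ℕ) :
    x ^ (r + 1) * y ^ r * ⁅x, y⁆ ^ e = x ^ (r + e + 1) * y ^ (r + e) -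
      ∑ k ∈ range e, x ^ (r + k + 1) * y ^ (r + k + 1) * (x * ⁅x, y⁆ ^ (e - 1 - k)) := by
  induction e generalizing r with
  | zero => simp
  | succ e ih =>
    have hsum :
        ∑ k ∈ range (e + 1), x ^ (r + k + 1) * y ^ (r + k + 1) * (x * ⁅x, y⁆ ^ (e + 1 - 1 - k)) =
          ∑ k ∈ range e, x ^ (r + 1 + k + 1) * y ^ (r + 1 + k + 1) * (x * ⁅x, y⁆ ^ (e - 1 - k)) +
            x ^ (r + 1) * y ^ (r + 1) * (x * ⁅x, y⁆ ^ e) := by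
      rw [sum_range_succ']
      refine congrArg₂ _ (sum_congr rfl fun k _ => ?_) (by simp)
      rw [show e + 1 - 1 - (k + 1) = e - 1 - k by omega, add_right_comm r 1 k, add_assoc r k 1]
    calc x ^ (r + 1) * y ^ r * ⁅x, y⁆ ^ (e + 1) = (x ^ (r + 1) * y ^ r * ⁅x, y⁆) * ⁅x, y⁆ ^ e := by
          rw [pow_succ' ⁅x, y⁆ e, ← mul_assoc]
      _ = x ^ (r + 1 + 1) * y ^ (r + 1) * ⁅x, y⁆ ^ e -
            x ^ (r + 1) * y ^ (r + 1) * (x * ⁅x, y⁆ ^ e) := by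
          rw [pow_succ_mul_pow_mul_lie h (hδ r), sub_mul, mul_assoc _ x]
      _ = _ := by rw [ih, hsum, sub_sub, show r + 1 + e = r + (e + 1) by omega]

theorem mul_lie_pow_mul_eq_sub_sum (h : x ^ 2 * y * x = x ^ 3 * y)
    (hδ : ∀ n, Commute (x * y) (x ^ n * y ^ n)) (t : ℕ) :
    x * ⁅x, y⁆ ^ t * y = x ^ (t + 1) * y ^ (t + 1) -
      ∑ k ∈ range t, x ^ (k + 1) * y ^ (k + 1) * (x * ⁅x, y⁆ ^ (t - 1 - k) * y) := by
  have := congrArg (· * y) (pow_succ_mul_pow_mul_lie_pow h hδ t 0)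
  simpa only [zero_add, pow_one, pow_zero, mul_one, sub_mul, sum_mul, mul_assoc, ← pow_succ]
    using this

theorem commute_mul_mul_lie_pow_mul (h : x ^ 2 * y * x = x ^ 3 * y)
    (hδ : ∀ n, Commute (x * y) (x ^ n * y ^ n)) (t : ℕ) :
    Commute (x * y) (x * ⁅x, y⁆ ^ t * y) := by
  induction t using Nat.strong_induction_on with
  | _ t ih =>
    rw [mul_lie_pow_mul_eq_sub_sum h hδ]
    exact (hδ _).sub_right <| Commute.sum_right _ _ _ fun k hk =>
      (hδ _).mul_right (ih _ (by have := mem_range.1 hk; omega))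

theorem regular_mul_lie_pow (h : ⁅x, y⁆ * y ^ 2 = 0)
    (hc : Commute (x * y) (x * ⁅x, y⁆ ^ (a + 1) * y)) (m : ℕ) :
    x * ⁅x, y⁆ ^ (a + 1) * y * ⁅x, y⁆ ^ m = (x * y) ^ m * (x * ⁅x, y⁆ ^ (a + 1) * y) := by
  induction m with
  | zero => simp
  | succ m ih =>
    calc x * ⁅x, y⁆ ^ (a + 1) * y * ⁅x, y⁆ ^ (m + 1)
        = x * ⁅x, y⁆ ^ a * (⁅x, y⁆ * y * ⁅x, y⁆) * ⁅x, y⁆ ^ m := by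
          rw [pow_succ' ⁅x, y⁆ m, pow_succ ⁅x, y⁆ a]; simp only [mul_assoc]
      _ = x * y * (x * ⁅x, y⁆ ^ (a + 1) * y * ⁅x, y⁆ ^ m) := by
          rw [lie_mul_right_mul_lie h, ← mul_assoc (x * y), hc.eq, pow_succ ⁅x, y⁆ a]
          simp only [mul_assoc]
      _ = (x * y) ^ (m + 1) * (x * ⁅x, y⁆ ^ (a + 1) * y) := by rw [ih, ← mul_assoc, ← pow_succ']

theorem lie_pow_mul_regular (h : x ^ 2 * ⁅x, y⁆ = 0)
    (hc : Commute (x * y) (x * ⁅x, y⁆ ^ (a + 1) * y)) (n : ℕ) :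
    ⁅x, y⁆ ^ n * (x * ⁅x, y⁆ ^ (a + 1) * y) = x * ⁅x, y⁆ ^ (a + 1) * y * (x * y) ^ n := by
  induction n with
  | zero => simp
  | succ n ih =>
    calc ⁅x, y⁆ ^ (n + 1) * (x * ⁅x, y⁆ ^ (a + 1) * y)
        = ⁅x, y⁆ ^ n * (⁅x, y⁆ * x * ⁅x, y⁆) * (⁅x, y⁆ ^ a * y) := by
          rw [pow_succ ⁅x, y⁆ n, pow_succ' ⁅x, y⁆ a]; simp only [mul_assoc]
      _ = ⁅x, y⁆ ^ n * (x * y * (x * ⁅x, y⁆ ^ (a + 1) * y)) := by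
          rw [lie_mul_left_mul_lie h, pow_succ' ⁅x, y⁆ a]; simp only [mul_assoc]
      _ = ⁅x, y⁆ ^ n * (x * ⁅x, y⁆ ^ (a + 1) * y) * (x * y) := by
          rw [hc.eq, ← mul_assoc]
      _ = x * ⁅x, y⁆ ^ (a + 1) * y * (x * y) ^ (n + 1) := by rw [ih, mul_assoc, ← pow_succ]

theorem regular_mul_preprojective_eq_zero (h₁ : y * (x * y ^ 2) = x * y ^ 3)
    (h₂ : x ^ 2 * y * x = x ^ 3 * y) (hδ : ∀ n, Commute (x * y) (x ^ n * y ^ n)) (a m : ℕ) :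
    x * ⁅x, y⁆ ^ (a + 1) * y * (⁅x, y⁆ ^ m * y) = 0 := by
  calc x * ⁅x, y⁆ ^ (a + 1) * y * (⁅x, y⁆ ^ m * y)
      = (x * y) ^ m * (x * ⁅x, y⁆ ^ a * (⁅x, y⁆ * y ^ 2)) := by
        rw [← mul_assoc, regular_mul_lie_pow (lie_mul_sq_eq_zero h₁)
          (commute_mul_mul_lie_pow_mul h₂ hδ _), pow_succ, sq]
        simp only [mul_assoc]
    _ = 0 := by rw [lie_mul_sq_eq_zero h₁, mul_zero, mul_zero]

theorem preinjective_mul_regular_eq_zero (h₂ : x ^ 2 * y * x = x ^ 3 * y)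
    (hδ : ∀ n, Commute (x * y) (x ^ n * y ^ n)) (a n : ℕ) :
    x * ⁅x, y⁆ ^ n * (x * ⁅x, y⁆ ^ (a + 1) * y) = 0 := by
  calc x * ⁅x, y⁆ ^ n * (x * ⁅x, y⁆ ^ (a + 1) * y)
      = x ^ 2 * ⁅x, y⁆ * (⁅x, y⁆ ^ a * y * (x * y) ^ n) := by
        rw [mul_assoc x, lie_pow_mul_regular (sq_mul_lie_eq_zero h₂)
          (commute_mul_mul_lie_pow_mul h₂ hδ _), pow_succ' ⁅x, y⁆ a, sq]
        simp only [mul_assoc]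
    _ = 0 := by rw [sq_mul_lie_eq_zero h₂, zero_mul]

end Kronecker

theorem jA_mul_iA_mul_jA_sq : jA * (iA * jA ^ 2) = iA * jA ^ 3 := by
  simpa [iA, jA] using RingQuot.mkAlgHom_rel ℚ (KroneckerRel0.preproj 0)

theorem iA_sq_mul_jA_mul_iA : iA ^ 2 * jA * iA = iA ^ 3 * jA := by
  simpa [iA, jA] using RingQuot.mkAlgHom_rel ℚ (KroneckerRel0.preinj 0)

theorem commute_iA_mul_jA_pow_mul_pow (n : ℕ) : Commute (iA * jA) (iA ^ n * jA ^ n) := by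
  rcases Nat.eq_zero_or_pos n with rfl | hn
  · simp
  · simpa [Commute, SemiconjBy, iA, jA] using
      RingQuot.mkAlgHom_rel ℚ (KroneckerRel0.deltaComm 1 n le_rfl hn)

theorem regular_kills_preprojective_preinjective (s m n : ℕ) (hs : 2 ≤ s) :
    (iA * (iA * jA - jA * iA) ^ (s - 1) * jA) * ((iA * jA - jA * iA) ^ m * jA) = 0 ∧
    (iA * (iA * jA - jA * iA) ^ n) * (iA * (iA * jA - jA * iA) ^ (s - 1) * jA) = 0 := by
  obtain ⟨a, rfl⟩ : ∃ a, s = a + 2 := ⟨s - 2, by omega⟩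
  rw [show a + 2 - 1 = a + 1 by omega, ← Ring.lie_def]
  exact ⟨Kronecker.regular_mul_preprojective_eq_zero jA_mul_iA_mul_jA_sq iA_sq_mul_jA_mul_iA
      commute_iA_mul_jA_pow_mul_pow a m,
    Kronecker.preinjective_mul_regular_eq_zero iA_sq_mul_jA_mul_iA
      commute_iA_mul_jA_pow_mul_pow a n⟩
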